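/- Let F ∈ ℂ[x₁,…,xₙ] be a polynomial of degree three with homogeneous decomposition F = F₃ + F₂ + F₁ + F₀, and suppose the Hilbert function of Apolar(F) is (1, n, n, 1), i.e., dim_ℂ(S∘F) = 2n + 2 (the maximal value). Then S∘F decomposes as the internal direct sum S∘F = ℂ·(F₃+F₂) ⊕ span_ℂ{αᵢ∘F₃ : 1 ≤ i ≤ n} ⊕ (ℂ ⊕ span_ℂ{x₁,…,xₙ}). Consequently, if G = F₃ + G₂ + G₁ + G₀ is another polynomial of degree three with the same leading form F₃ and with G₂ − F₂ ∈ span_ℂ{αᵢ∘F₃ : 1 ≤ i ≤ n}, then S∘G = S∘F and hence Ann(G) = Ann(F). -/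

import Mathlib

/-!
Every `σ∘F` is a multiple of `F`, a combination of the `∂ᵢF`, or lies in `m²∘F`, and for a cubic
`F` the latter consists of polynomials of degree `≤ 1`. Hence
`S∘F ⊆ ℂ(F₃+F₂) + span{∂ᵢF₃} + P≤1`, where `P≤1` is the space of polynomials of degree `≤ 1`;
its dimension is at most `1 + n + (n+1) = 2n+2`, so the maximality of `dim S∘F` forces both
equality and independence, and it also forces `m²∘F = P≤1`.

For `G` as in the statement, `G ∈ S∘F`. Conversely, `m²∘F` and `m²∘G` agree modulo constants, and
`1 ∈ S∘G` because a nonzero third partial of `F₃` is a nonzero constant; hence `P≤1 ⊆ S∘G`. Modulo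
`P≤1`, `∂ᵢF₃ ≡ ∂ᵢG` and `F₃ + F₂ ≡ G - (G₂ - F₂)`, so `S∘F ⊆ S∘G`. Equal spaces `S∘F = S∘G` give
equal annihilators.
-/

noncomputable section

open MvPolynomial

namespace Apolarity

variable {n : ℕ}

/-- Partial derivatives commute. -/
lemma pderiv_comm {σ : Type*} {R : Type*} [CommSemiring R] (i j : σ)
    (p : MvPolynomial σ R) :
    MvPolynomial.pderiv i (MvPolynomial.pderiv j p) =
      MvPolynomial.pderiv j (MvPolynomial.pderiv i p) := by
  classical
  induction p using MvPolynomial.induction_on' with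
  | monomial s a =>
      simp only [pderiv_monomial]
      rcases eq_or_ne i j with rfl | hij
      · rfl
      · rw [tsub_right_comm]
        congr 1
        rw [Finsupp.tsub_apply, Finsupp.tsub_apply, Finsupp.single_eq_of_ne' hij,
          Finsupp.single_eq_of_ne' (Ne.symm hij)]
        simp only [Nat.sub_zero]
        ring
  | add p q hp hq => simp [hp, hq]

/-- The set of partial-derivative operators on `P = ℂ[x₁,…,xₙ]`. -/
def pdSet (n : ℕ) : Set (Module.End ℂ (MvPolynomial (Fin n) ℂ)) :=
  Set.range fun i : Fin n => (MvPolynomial.pderiv i).toLinearMap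

lemma pdSet_comm : ∀ a ∈ pdSet n, ∀ b ∈ pdSet n, a * b = b * a := by
  rintro _ ⟨i, rfl⟩ _ ⟨j, rfl⟩
  refine LinearMap.ext fun p => ?_
  simp only [Module.End.mul_apply]
  exact pderiv_comm i j p

/-- The algebra map `S = ℂ[α₁,…,αₙ] → End_ℂ(P)` sending `αᵢ` to `∂/∂xᵢ`.
`D n σ F` is the action `σ∘F` of `σ ∈ S` on `F ∈ P = ℂ[x₁,…,xₙ]`. -/
def D (n : ℕ) : MvPolynomial (Fin n) ℂ →ₐ[ℂ] Module.End ℂ (MvPolynomial (Fin n) ℂ) :=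
  letI : CommSemiring (Algebra.adjoin ℂ (pdSet n)) :=
    Algebra.adjoinCommSemiringOfComm ℂ pdSet_comm
  ((Algebra.adjoin ℂ (pdSet n)).val).comp
    (MvPolynomial.aeval fun i : Fin n =>
      (⟨(MvPolynomial.pderiv i).toLinearMap,
        Algebra.subset_adjoin (Set.mem_range_self i)⟩ : Algebra.adjoin ℂ (pdSet n)))

@[simp] lemma D_X (i : Fin n) (F : MvPolynomial (Fin n) ℂ) :
    D n (X i) F = MvPolynomial.pderiv i F := by
  simp [D]

/-- The apolar ideal `Ann(F) = {σ ∈ S : σ∘F = 0}`. -/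
def annIdeal (F : MvPolynomial (Fin n) ℂ) : Ideal (MvPolynomial (Fin n) ℂ) where
  carrier := {σ | D n σ F = 0}
  zero_mem' := by simp
  add_mem' := by
    intro a b ha hb
    simp only [Set.mem_setOf_eq, map_add, LinearMap.add_apply] at *
    rw [ha, hb, add_zero]
  smul_mem' := by
    intro c x hx
    simp only [Set.mem_setOf_eq, smul_eq_mul, map_mul, Module.End.mul_apply] at *
    rw [hx, map_zero]

/-- The apolar algebra `Apolar(F) = S/Ann(F)`. -/
abbrev Apolar (F : MvPolynomial (Fin n) ℂ) := MvPolynomial (Fin n) ℂ ⧸ annIdeal F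

/-- The `ℂ`-linear map `σ ↦ σ∘F`. -/
def applyAt (F : MvPolynomial (Fin n) ℂ) :
    MvPolynomial (Fin n) ℂ →ₗ[ℂ] MvPolynomial (Fin n) ℂ where
  toFun σ := D n σ F
  map_add' a b := by simp only [map_add, LinearMap.add_apply]
  map_smul' c a := by simp only [map_smul, LinearMap.smul_apply, RingHom.id_apply]

/-- `S_r∘F`, the image of the degree-`r` part of `S` acting on `F`. -/
def SrF (r : ℕ) (F : MvPolynomial (Fin n) ℂ) : Submodule ℂ (MvPolynomial (Fin n) ℂ) :=
  (MvPolynomial.homogeneousSubmodule (Fin n) ℂ r).map (applyAt F)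

/-- The perpendicular space of an ideal `J ⊆ S`:
polynomials killed by every element of `J`. -/
def perp (J : Ideal (MvPolynomial (Fin n) ℂ)) : Submodule ℂ (MvPolynomial (Fin n) ℂ) :=
  ⨅ σ ∈ J, LinearMap.ker (D n σ)

lemma mem_perp {J : Ideal (MvPolynomial (Fin n) ℂ)} {G : MvPolynomial (Fin n) ℂ} :
    G ∈ perp J ↔ ∀ σ ∈ J, D n σ G = 0 := by
  simp [perp, Submodule.mem_iInf, LinearMap.mem_ker]

end Apolarity

namespace MvPolynomial

variable {σ R : Type*}

section CommSemiring

variable [CommSemiring R]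

theorem restrictTotalDegree_mono {m k : ℕ} (h : m ≤ k) :
    restrictTotalDegree σ R m ≤ restrictTotalDegree σ R k := fun p hp => by
  rw [mem_restrictTotalDegree] at hp ⊢
  exact hp.trans h

theorem IsHomogeneous.mem_restrictTotalDegree {p : MvPolynomial σ R} {m : ℕ}
    (hp : p.IsHomogeneous m) : p ∈ restrictTotalDegree σ R m := by
  rw [MvPolynomial.mem_restrictTotalDegree]
  exact hp.totalDegree_le

theorem eq_C_of_mem_restrictTotalDegree_zero {p : MvPolynomial σ R}
    (hp : p ∈ restrictTotalDegree σ R 0) : p = C (coeff 0 p) := by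
  rw [mem_restrictTotalDegree, Nat.le_zero] at hp
  exact totalDegree_eq_zero_iff_eq_C.mp hp

theorem totalDegree_pderiv_le (i : σ) (p : MvPolynomial σ R) :
    (pderiv i p).totalDegree ≤ p.totalDegree - 1 := by
  refine Finset.sup_le fun d hd => ?_
  have hcoeff : coeff (d + Finsupp.single i 1) p ≠ 0 := by
    intro h0
    rw [mem_support_iff, coeff_pderiv, h0, zero_mul] at hd
    exact hd rfl
  have := le_totalDegree (mem_support_iff.mpr hcoeff)
  rw [Finsupp.sum_add_index' (fun _ => rfl) (fun _ _ _ => rfl),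
    Finsupp.sum_single_index rfl] at this
  omega

theorem pderiv_mem_restrictTotalDegree (i : σ) {p : MvPolynomial σ R} {m : ℕ}
    (hp : p ∈ restrictTotalDegree σ R (m + 1)) : pderiv i p ∈ restrictTotalDegree σ R m := by
  rw [mem_restrictTotalDegree] at hp ⊢
  have := totalDegree_pderiv_le i p
  omega

theorem restrictTotalDegree_one_eq_span :
    restrictTotalDegree σ R 1 = Submodule.span R ({1} ∪ Set.range X) := by
  refine le_antisymm (fun p hp => ?_) (Submodule.span_le.mpr ?_)
  · rw [mem_restrictTotalDegree] at hp
    rw [p.as_sum]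
    refine Submodule.sum_mem _ fun d hd => ?_
    rcases Nat.le_one_iff_eq_zero_or_eq_one.mp ((le_totalDegree hd).trans hp) with h0 | h1
    · obtain rfl : d = 0 := (Finsupp.degree_eq_zero_iff d).mp h0
      rw [monomial_zero', C_eq_smul_one]
      exact Submodule.smul_mem _ _ (Submodule.subset_span (Or.inl rfl))
    · obtain ⟨i, rfl⟩ := (Finsupp.sum_eq_one_iff d).mp h1
      rw [← mul_one (coeff _ p), ← smul_eq_mul, ← smul_monomial]
      exact Submodule.smul_mem _ _ (Submodule.subset_span (Or.inr ⟨i, rfl⟩))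
  · rintro _ (rfl | ⟨i, rfl⟩) <;> rw [SetLike.mem_coe, mem_restrictTotalDegree]
    · simp
    · exact (totalDegree_monomial_le _ _).trans_eq (Finsupp.sum_single_index rfl)

end CommSemiring

theorem finrank_restrictTotalDegree_one_le [Field R] [Fintype σ] :
    Module.finrank R (restrictTotalDegree σ R 1) ≤ Fintype.card σ + 1 := by
  rw [restrictTotalDegree_one_eq_span, Submodule.span_union, add_comm]
  have : FiniteDimensional R (Submodule.span R (Set.range (X : σ → MvPolynomial σ R))) :=
    FiniteDimensional.span_of_finite R (Set.finite_range _)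
  refine (Submodule.finrank_add_le_finrank_add_finrank _ _).trans (add_le_add ?_ ?_)
  · simpa using finrank_span_le_card (R := R) ({1} : Set (MvPolynomial σ R))
  · exact finrank_range_le_card (R := R) X

variable [CommRing R] [CharZero R] [NoZeroDivisors R] [Fintype σ]

theorem IsHomogeneous.exists_pderiv_ne_zero {p : MvPolynomial σ R} {m : ℕ}
    (hp : p.IsHomogeneous m) (hm : m ≠ 0) (h0 : p ≠ 0) : ∃ i, pderiv i p ≠ 0 := by
  by_contra! h
  have := hp.sum_X_mul_pderiv
  simp only [h, mul_zero, Finset.sum_const_zero] at this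
  exact h0 ((smul_eq_zero.mp this.symm).resolve_left hm)

theorem IsHomogeneous.exists_pderiv_pderiv_pderiv_eq_C {p : MvPolynomial σ R}
    (hp : p.IsHomogeneous 3) (h0 : p ≠ 0) :
    ∃ i j k a, a ≠ 0 ∧ pderiv i (pderiv j (pderiv k p)) = C a := by
  obtain ⟨k, hk⟩ := hp.exists_pderiv_ne_zero three_ne_zero h0
  obtain ⟨j, hj⟩ := hp.pderiv.exists_pderiv_ne_zero two_ne_zero hk
  obtain ⟨i, hi⟩ := hp.pderiv.pderiv.exists_pderiv_ne_zero one_ne_zero hj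
  have hC := eq_C_of_mem_restrictTotalDegree_zero (p := pderiv i (pderiv j (pderiv k p)))
    hp.pderiv.pderiv.pderiv.mem_restrictTotalDegree
  refine ⟨i, j, k, _, fun ha => hi ?_, hC⟩
  rw [hC, ha, C_0]

end MvPolynomial

open Module

namespace Submodule

variable {K V : Type*} [DivisionRing K] [AddCommGroup V] [Module K V]

theorem finrank_span_singleton_le (v : V) : finrank K (K ∙ v) ≤ 1 :=
  (finrank_span_le_card ({v} : Set V)).trans_eq (by simp)

theorem finrank_sup_sup_le (s t u : Submodule K V) [FiniteDimensional K s]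
    [FiniteDimensional K t] [FiniteDimensional K u] :
    finrank K ↥(s ⊔ t ⊔ u) ≤ finrank K s + finrank K t + finrank K u :=
  (finrank_add_le_finrank_add_finrank _ _).trans
    (Nat.add_le_add_right (finrank_add_le_finrank_add_finrank _ _) _)

theorem disjoint_of_finrank_add_finrank_le {s t : Submodule K V} [FiniteDimensional K s]
    [FiniteDimensional K t] (h : finrank K s + finrank K t ≤ finrank K ↥(s ⊔ t)) :
    Disjoint s t := by
  have := finrank_sup_add_finrank_inf_eq s t
  rw [disjoint_iff, ← finrank_eq_zero]
  omega

theorem iSupIndep_fin_three_of_finrank_le {f : Fin 3 → Submodule K V}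
    [hfin : FiniteDimensional K ↥(f 0 ⊔ f 1 ⊔ f 2)]
    (h : finrank K (f 0) + finrank K (f 1) + finrank K (f 2) ≤ finrank K ↥(f 0 ⊔ f 1 ⊔ f 2)) :
    iSupIndep f := by
  have : ∀ i, FiniteDimensional K (f i) := fun i =>
    finiteDimensional_of_le (show f i ≤ f 0 ⊔ f 1 ⊔ f 2 by
      fin_cases i
      exacts [le_sup_left.trans le_sup_left, le_sup_right.trans le_sup_left, le_sup_right])
  have key : ∀ a b c : Fin 3, f a ⊔ (f b ⊔ f c) = f 0 ⊔ f 1 ⊔ f 2 →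
      finrank K (f a) + finrank K (f b) + finrank K (f c) =
        finrank K (f 0) + finrank K (f 1) + finrank K (f 2) → Disjoint (f a) (f b ⊔ f c) := by
    intro a b c hsup hsum
    refine disjoint_of_finrank_add_finrank_le ?_
    have := finrank_add_le_finrank_add_finrank (f b) (f c)
    rw [hsup]
    omega
  rw [iSupIndep_fin_three]
  exact ⟨key 0 1 2 (sup_assoc ..).symm rfl, key 1 2 0 (by ac_rfl) (by ac_rfl),
    key 2 0 1 (by ac_rfl) (by ac_rfl)⟩

end Submodule

namespace Apolarity

open Submodule

variable {n : ℕ}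

theorem D_C (c : ℂ) (F : MvPolynomial (Fin n) ℂ) : D n (C c) F = c • F := by
  rw [← algebraMap_eq, AlgHom.commutes]
  rfl

theorem D_mul (σ τ F : MvPolynomial (Fin n) ℂ) : D n (σ * τ) F = D n σ (D n τ F) := by
  rw [map_mul]
  rfl

theorem D_X_mul (i : Fin n) (σ F : MvPolynomial (Fin n) ℂ) :
    D n (X i * σ) F = pderiv i (D n σ F) := by
  rw [D_mul, D_X]

@[simp] lemma applyAt_apply (F σ : MvPolynomial (Fin n) ℂ) : applyAt F σ = D n σ F := rfl

theorem mem_range_applyAt_self (F : MvPolynomial (Fin n) ℂ) :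
    F ∈ LinearMap.range (applyAt F) :=
  ⟨1, by rw [applyAt_apply, map_one]; rfl⟩

theorem range_applyAt_le_of_mem {F G : MvPolynomial (Fin n) ℂ}
    (h : G ∈ LinearMap.range (applyAt F)) :
    LinearMap.range (applyAt G) ≤ LinearMap.range (applyAt F) := by
  obtain ⟨ρ, rfl⟩ := h
  rintro _ ⟨τ, rfl⟩
  exact ⟨τ * ρ, D_mul τ ρ F⟩

theorem annIdeal_le_of_mem_range {F G : MvPolynomial (Fin n) ℂ}
    (h : G ∈ LinearMap.range (applyAt F)) : annIdeal F ≤ annIdeal G := by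
  obtain ⟨ρ, rfl⟩ := h
  intro σ (hσ : D n σ F = 0)
  show D n σ (D n ρ F) = 0
  rw [← D_mul, mul_comm, D_mul, hσ, map_zero]

theorem annIdeal_eq_of_range_eq {F G : MvPolynomial (Fin n) ℂ}
    (h : LinearMap.range (applyAt F) = LinearMap.range (applyAt G)) :
    annIdeal F = annIdeal G :=
  le_antisymm (annIdeal_le_of_mem_range (h ▸ mem_range_applyAt_self G))
    (annIdeal_le_of_mem_range (h ▸ mem_range_applyAt_self F))

theorem D_mem_restrictTotalDegree (σ : MvPolynomial (Fin n) ℂ) {F : MvPolynomial (Fin n) ℂ}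
    {m : ℕ} (hF : F ∈ restrictTotalDegree (Fin n) ℂ m) :
    D n σ F ∈ restrictTotalDegree (Fin n) ℂ m := by
  induction σ using MvPolynomial.induction_on with
  | C a => rw [D_C]; exact smul_mem _ a hF
  | add p q hp hq => rw [map_add]; exact add_mem hp hq
  | mul_X p i hp =>
    rw [mul_comm, D_X_mul]
    exact pderiv_mem_restrictTotalDegree i (restrictTotalDegree_mono m.le_succ hp)

def firstPartials (F : MvPolynomial (Fin n) ℂ) : Submodule ℂ (MvPolynomial (Fin n) ℂ) :=
  span ℂ (Set.range fun i => pderiv i F)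

/-- `m²∘F` for the maximal ideal `m = (α₁, …, αₙ)` of `S`. -/
def higherPartials (F : MvPolynomial (Fin n) ℂ) : Submodule ℂ (MvPolynomial (Fin n) ℂ) :=
  span ℂ {p | ∃ i j σ, D n (X i * X j * σ) F = p}

theorem firstPartials_le {F : MvPolynomial (Fin n) ℂ} {M : Submodule ℂ (MvPolynomial (Fin n) ℂ)}
    (h : ∀ i, pderiv i F ∈ M) : firstPartials F ≤ M :=
  span_le.mpr (Set.range_subset_iff.mpr h)

theorem higherPartials_le {F : MvPolynomial (Fin n) ℂ} {M : Submodule ℂ (MvPolynomial (Fin n) ℂ)}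
    (h : ∀ i j σ, D n (X i * X j * σ) F ∈ M) : higherPartials F ≤ M :=
  span_le.mpr fun _ ⟨i, j, σ, hp⟩ => hp ▸ h i j σ

instance (F : MvPolynomial (Fin n) ℂ) : FiniteDimensional ℂ (firstPartials F) :=
  FiniteDimensional.span_of_finite ℂ (Set.finite_range _)

theorem finrank_firstPartials_le (F : MvPolynomial (Fin n) ℂ) :
    finrank ℂ (firstPartials F) ≤ n :=
  (finrank_range_le_card (R := ℂ) fun i => pderiv i F).trans_eq (Fintype.card_fin n)

theorem range_applyAt_le (F : MvPolynomial (Fin n) ℂ) :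
    LinearMap.range (applyAt F) ≤ span ℂ {F} ⊔ firstPartials F ⊔ higherPartials F := by
  have hpderiv : ∀ i, (span ℂ {F} ⊔ firstPartials F ⊔ higherPartials F).map
      (pderiv i).toLinearMap ≤ span ℂ {F} ⊔ firstPartials F ⊔ higherPartials F := by
    intro i
    simp only [firstPartials, higherPartials, Submodule.map_sup, map_span, Set.image_singleton]
    refine sup_le (sup_le ?_ ?_) ?_ <;> rw [span_le]
    · rintro _ rfl
      exact mem_sup_left (mem_sup_right (subset_span ⟨i, rfl⟩))
    · rintro _ ⟨_, ⟨j, rfl⟩, rfl⟩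
      exact mem_sup_right (subset_span ⟨i, j, 1, by simp⟩)
    · rintro _ ⟨_, ⟨a, b, σ, rfl⟩, rfl⟩
      refine mem_sup_right (subset_span ⟨a, b, X i * σ, ?_⟩)
      change _ = pderiv i _
      rw [← D_X_mul]
      congr 2
      ring
  rintro _ ⟨σ, rfl⟩
  induction σ using MvPolynomial.induction_on with
  | C a =>
    rw [applyAt_apply, D_C]
    exact smul_mem _ a (mem_sup_left (mem_sup_left (mem_span_singleton_self F)))
  | add p q hp hq => rw [map_add]; exact add_mem hp hq
  | mul_X p i hp =>
    rw [applyAt_apply, mul_comm, D_X_mul]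
    exact hpderiv i ⟨_, hp, rfl⟩

theorem higherPartials_le_restrictTotalDegree {F : MvPolynomial (Fin n) ℂ} {m : ℕ}
    (hF : F ∈ restrictTotalDegree (Fin n) ℂ (m + 2)) :
    higherPartials F ≤ restrictTotalDegree (Fin n) ℂ m := by
  refine higherPartials_le fun i j σ => ?_
  rw [mul_assoc, D_X_mul, D_X_mul]
  exact pderiv_mem_restrictTotalDegree i
    (pderiv_mem_restrictTotalDegree j (D_mem_restrictTotalDegree σ hF))

theorem higherPartials_le_range_applyAt {F G : MvPolynomial (Fin n) ℂ}
    (h1 : 1 ∈ LinearMap.range (applyAt G)) (hFG : F - G ∈ restrictTotalDegree (Fin n) ℂ 2) :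
    higherPartials F ≤ LinearMap.range (applyAt G) := by
  refine higherPartials_le fun i j σ => ?_
  -- a higher partial of `F - G` is a constant, and constants lie in `S∘G` since `1` does
  have hconst := eq_C_of_mem_restrictTotalDegree_zero
    (higherPartials_le_restrictTotalDegree hFG (subset_span ⟨i, j, σ, rfl⟩))
  have hsplit : D n (X i * X j * σ) F =
      applyAt G (X i * X j * σ) + D n (X i * X j * σ) (F - G) := by
    rw [applyAt_apply, map_sub, add_sub_cancel]
  rw [hsplit, hconst, C_eq_smul_one]
  exact add_mem ⟨_, rfl⟩ (smul_mem _ _ h1)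

theorem one_mem_range_applyAt {F₃ Q : MvPolynomial (Fin n) ℂ} (h3 : F₃.IsHomogeneous 3)
    (hne : F₃ ≠ 0) (hQ : Q ∈ restrictTotalDegree (Fin n) ℂ 2) :
    1 ∈ LinearMap.range (applyAt (F₃ + Q)) := by
  obtain ⟨i, j, k, a, ha, hijk⟩ := h3.exists_pderiv_pderiv_pderiv_eq_C hne
  have hQ0 : pderiv i (pderiv j (pderiv k Q)) = 0 := by
    rw [eq_C_of_mem_restrictTotalDegree_zero (pderiv_mem_restrictTotalDegree j
      (pderiv_mem_restrictTotalDegree k hQ)), pderiv_C]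
  have hCa : C a ∈ LinearMap.range (applyAt (F₃ + Q)) :=
    ⟨X i * (X j * X k), by rw [applyAt_apply, D_X_mul, D_X_mul, D_X, map_add, map_add,
      map_add, hijk, hQ0, add_zero]⟩
  have h1 : (1 : MvPolynomial (Fin n) ℂ) = a⁻¹ • C a := by
    rw [smul_eq_C_mul, ← C_mul, inv_mul_cancel₀ ha, C_1]
  rw [h1]
  exact smul_mem _ _ hCa

theorem finrank_span_add_finrank_firstPartials_add_finrank_le (f g : MvPolynomial (Fin n) ℂ) :
    finrank ℂ (ℂ ∙ f) + finrank ℂ (firstPartials g) +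
      finrank ℂ (restrictTotalDegree (Fin n) ℂ 1) ≤ 2 * n + 2 := by
  have := finrank_span_singleton_le (K := ℂ) f
  have := finrank_firstPartials_le g
  have := finrank_restrictTotalDegree_one_le (σ := Fin n) (R := ℂ)
  rw [Fintype.card_fin] at this
  omega

theorem add_add_mem_restrictTotalDegree {F₃ F₂ L : MvPolynomial (Fin n) ℂ}
    (h3 : F₃ ∈ restrictTotalDegree (Fin n) ℂ 3) (h2 : F₂ ∈ restrictTotalDegree (Fin n) ℂ 2)
    (hL : L ∈ restrictTotalDegree (Fin n) ℂ 1) : F₃ + F₂ + L ∈ restrictTotalDegree (Fin n) ℂ 3 :=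
  add_mem (add_mem h3 (restrictTotalDegree_mono (by norm_num) h2))
    (restrictTotalDegree_mono (by norm_num) hL)

theorem range_applyAt_le_sup {F₃ F₂ L : MvPolynomial (Fin n) ℂ}
    (h3 : F₃ ∈ restrictTotalDegree (Fin n) ℂ 3) (h2 : F₂ ∈ restrictTotalDegree (Fin n) ℂ 2)
    (hL : L ∈ restrictTotalDegree (Fin n) ℂ 1) :
    LinearMap.range (applyAt (F₃ + F₂ + L)) ≤
      ℂ ∙ (F₃ + F₂) ⊔ firstPartials F₃ ⊔ restrictTotalDegree (Fin n) ℂ 1 := by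
  refine (range_applyAt_le _).trans (sup_le (sup_le ?_ ?_) ?_)
  · rw [span_le, Set.singleton_subset_iff]
    exact add_mem (mem_sup_left (mem_sup_left (mem_span_singleton_self _))) (mem_sup_right hL)
  · refine firstPartials_le fun i => ?_
    rw [add_assoc, map_add]
    exact add_mem (mem_sup_left (mem_sup_right (subset_span ⟨i, rfl⟩)))
      (mem_sup_right (pderiv_mem_restrictTotalDegree i
        (add_mem h2 (restrictTotalDegree_mono (by norm_num) hL))))
  · exact le_sup_of_le_right
      (higherPartials_le_restrictTotalDegree (add_add_mem_restrictTotalDegree h3 h2 hL))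

theorem range_applyAt_eq_sup {F₃ F₂ L : MvPolynomial (Fin n) ℂ}
    (h3 : F₃ ∈ restrictTotalDegree (Fin n) ℂ 3) (h2 : F₂ ∈ restrictTotalDegree (Fin n) ℂ 2)
    (hL : L ∈ restrictTotalDegree (Fin n) ℂ 1)
    (hdim : finrank ℂ (LinearMap.range (applyAt (F₃ + F₂ + L))) = 2 * n + 2) :
    LinearMap.range (applyAt (F₃ + F₂ + L)) =
      ℂ ∙ (F₃ + F₂) ⊔ firstPartials F₃ ⊔ restrictTotalDegree (Fin n) ℂ 1 := by
  refine eq_of_le_of_finrank_le (range_applyAt_le_sup h3 h2 hL) ?_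
  rw [hdim]
  exact (finrank_sup_sup_le _ _ _).trans
    (finrank_span_add_finrank_firstPartials_add_finrank_le _ _)

theorem higherPartials_eq {F : MvPolynomial (Fin n) ℂ}
    (hF : F ∈ restrictTotalDegree (Fin n) ℂ 3)
    (hdim : finrank ℂ (LinearMap.range (applyAt F)) = 2 * n + 2) :
    higherPartials F = restrictTotalDegree (Fin n) ℂ 1 := by
  have hle := higherPartials_le_restrictTotalDegree (m := 1) hF
  have : FiniteDimensional ℂ (higherPartials F) := finiteDimensional_of_le hle
  refine eq_of_le_of_finrank_le hle ?_
  have hrange := hdim ▸ (finrank_mono (range_applyAt_le F)).trans (finrank_sup_sup_le _ _ _)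
  have := finrank_span_add_finrank_firstPartials_add_finrank_le F F
  omega

theorem range_applyAt_eq_of_sub_mem_firstPartials {F₃ F₂ L G₂ L' : MvPolynomial (Fin n) ℂ}
    (h3 : F₃.IsHomogeneous 3) (hne : F₃ ≠ 0) (h2 : F₂ ∈ restrictTotalDegree (Fin n) ℂ 2)
    (hL : L ∈ restrictTotalDegree (Fin n) ℂ 1) (hG₂ : G₂ ∈ restrictTotalDegree (Fin n) ℂ 2)
    (hL' : L' ∈ restrictTotalDegree (Fin n) ℂ 1)
    (hdim : finrank ℂ (LinearMap.range (applyAt (F₃ + F₂ + L))) = 2 * n + 2)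
    (hGF : G₂ - F₂ ∈ firstPartials F₃) :
    LinearMap.range (applyAt (F₃ + G₂ + L')) = LinearMap.range (applyAt (F₃ + F₂ + L)) := by
  have heq := range_applyAt_eq_sup h3.mem_restrictTotalDegree h2 hL hdim
  have hL'2 : L' ∈ restrictTotalDegree (Fin n) ℂ 2 := restrictTotalDegree_mono (by norm_num) hL'
  have hG : F₃ + G₂ + L' ∈ LinearMap.range (applyAt (F₃ + F₂ + L)) := by
    rw [heq, show F₃ + G₂ + L' = F₃ + F₂ + (G₂ - F₂) + L' by ring]
    exact add_mem (add_mem (mem_sup_left (mem_sup_left (mem_span_singleton_self _)))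
      (mem_sup_left (mem_sup_right hGF))) (mem_sup_right hL')
  refine le_antisymm (range_applyAt_le_of_mem hG) ?_
  have h1 : 1 ∈ LinearMap.range (applyAt (F₃ + G₂ + L')) := by
    rw [add_assoc]
    exact one_mem_range_applyAt h3 hne (add_mem hG₂ hL'2)
  have hW : restrictTotalDegree (Fin n) ℂ 1 ≤ LinearMap.range (applyAt (F₃ + G₂ + L')) := by
    rw [← higherPartials_eq
      (add_add_mem_restrictTotalDegree h3.mem_restrictTotalDegree h2 hL) hdim]
    refine higherPartials_le_range_applyAt h1 ?_
    rw [show F₃ + F₂ + L - (F₃ + G₂ + L') = F₂ - G₂ + (L - L') by ring]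
    exact add_mem (sub_mem h2 hG₂) (sub_mem (restrictTotalDegree_mono (by norm_num) hL) hL'2)
  have hB : firstPartials F₃ ≤ LinearMap.range (applyAt (F₃ + G₂ + L')) := by
    refine firstPartials_le fun i => ?_
    rw [show pderiv i F₃ = applyAt (F₃ + G₂ + L') (X i) - pderiv i (G₂ + L') by
      rw [applyAt_apply, D_X, add_assoc, map_add, add_sub_cancel_right]]
    exact sub_mem ⟨_, rfl⟩ (hW (pderiv_mem_restrictTotalDegree i (add_mem hG₂ hL'2)))
  have hA : F₃ + F₂ ∈ LinearMap.range (applyAt (F₃ + G₂ + L')) := by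
    rw [show F₃ + F₂ = F₃ + G₂ + L' - (G₂ - F₂) - L' by ring]
    exact sub_mem (sub_mem (mem_range_applyAt_self _) (hB hGF)) (hW hL')
  rw [heq]
  exact sup_le (sup_le ((span_singleton_le_iff_mem _ _).mpr hA) hB) hW

/-- Let `F = F₃ + F₂ + F₁ + F₀ ∈ ℂ[x₁,…,xₙ]` be a polynomial of degree
three whose apolar algebra has the maximal Hilbert function `(1, n, n, 1)`, i.e.
`dim_ℂ (S∘F) = 2n + 2`. Then `S∘F` is the internal direct sum
`ℂ·(F₃+F₂) ⊕ span{αᵢ∘F₃} ⊕ (ℂ ⊕ span{x₁,…,xₙ})`; consequently, if `G = F₃+G₂+G₁+G₀`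
is another degree-three polynomial with the same leading form and
`G₂ − F₂ ∈ span{αᵢ∘F₃}`, then `S∘G = S∘F` and `Ann(G) = Ann(F)`. -/
theorem apolar_of_cubic_depends_on_leading_data
    {n : ℕ} (F₃ F₂ F₁ F₀ : MvPolynomial (Fin n) ℂ)
    (h3 : F₃.IsHomogeneous 3) (h2 : F₂.IsHomogeneous 2)
    (h1 : F₁.IsHomogeneous 1) (h0 : F₀.IsHomogeneous 0)
    (hne : F₃ ≠ 0)
    (hdim : Module.finrank ℂ (LinearMap.range (applyAt (F₃ + F₂ + F₁ + F₀))) = 2 * n + 2) :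
    (LinearMap.range (applyAt (F₃ + F₂ + F₁ + F₀)) =
        Submodule.span ℂ {F₃ + F₂} ⊔
        Submodule.span ℂ (Set.range fun i : Fin n => MvPolynomial.pderiv i F₃) ⊔
        Submodule.span ℂ
          ({1} ∪ Set.range (X : Fin n → MvPolynomial (Fin n) ℂ))) ∧
    iSupIndep
      (fun k : Fin 3 =>
        match k with
        | 0 => Submodule.span ℂ {F₃ + F₂}
        | 1 => Submodule.span ℂ (Set.range fun i : Fin n => MvPolynomial.pderiv i F₃)
        | 2 => Submodule.span ℂ
            ({1} ∪ Set.range (X : Fin n → MvPolynomial (Fin n) ℂ))) ∧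
    (∀ G₂ G₁' G₀' : MvPolynomial (Fin n) ℂ,
      G₂.IsHomogeneous 2 → G₁'.IsHomogeneous 1 → G₀'.IsHomogeneous 0 →
      G₂ - F₂ ∈ Submodule.span ℂ (Set.range fun i : Fin n => MvPolynomial.pderiv i F₃) →
      LinearMap.range (applyAt (F₃ + G₂ + G₁' + G₀')) =
          LinearMap.range (applyAt (F₃ + F₂ + F₁ + F₀)) ∧
        annIdeal (F₃ + G₂ + G₁' + G₀') = annIdeal (F₃ + F₂ + F₁ + F₀)) := by
  have hL : F₁ + F₀ ∈ restrictTotalDegree (Fin n) ℂ 1 := add_mem h1.mem_restrictTotalDegree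
    (restrictTotalDegree_mono zero_le_one h0.mem_restrictTotalDegree)
  rw [add_assoc (F₃ + F₂)] at hdim ⊢
  rw [← restrictTotalDegree_one_eq_span]
  have heq := range_applyAt_eq_sup h3.mem_restrictTotalDegree h2.mem_restrictTotalDegree hL hdim
  refine ⟨heq, ?_, fun G₂ G₁' G₀' hG2 hG1 hG0 hGF => ?_⟩
  · have : FiniteDimensional ℂ (LinearMap.range (applyAt (F₃ + F₂ + (F₁ + F₀)))) :=
      Module.finite_of_finrank_pos (by omega)
    rw [heq] at this hdim
    exact iSupIndep_fin_three_of_finrank_le (hfin := this)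
      (hdim ▸ finrank_span_add_finrank_firstPartials_add_finrank_le _ _)
  · rw [add_assoc (F₃ + G₂)]
    have hrange := range_applyAt_eq_of_sub_mem_firstPartials h3 hne h2.mem_restrictTotalDegree hL
      hG2.mem_restrictTotalDegree (add_mem hG1.mem_restrictTotalDegree
        (restrictTotalDegree_mono zero_le_one hG0.mem_restrictTotalDegree)) hdim hGF
    exact ⟨hrange, annIdeal_eq_of_range_eq hrange⟩

end Apolarity
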